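/- arXiv:1603.06056 — 4 statements merged into one kernel-verified Lean document; each statement's English description precedes it below -/
import Mathlib

section
/- Let D be a triangulated category and let (U, V) and (V, W) be stable t-structures in D. Then for the canonical embedding i_* : V → D there is a recollement of D relative to V and D/V such that the essential image of the left adjoint functor j_! : D/V → D equals U and the essential image of the right adjoint functor j_* : D/V → D equals W. -/
/-!
For a stable t-structure `(S, T)`, the triangle `A ⟶ X ⟶ B ⟶ A⟦1⟧` exhibits `X ⟶ B` as a
reflection of `X` into `T` and `A ⟶ X` as a coreflection into `S`. Their cones lie in `S`
(resp. `T`), and every object of `T` (resp. `S`) is local for morphisms with cone in `S`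
(resp. `T`), so the reflector `C ⥤ T` is a localization at `coneIn S` and the coreflector
`C ⥤ S` is one at `coneIn T`. For `(U, V)` and `(V, W)` this yields `i^*` and `i^!`, and by
uniqueness of localizations it identifies `D/V` with both `U` and `W`; `j_!` and `j_*` are the
inclusions of `U` and `W` composed with these equivalences. All kernels are orthogonals:
`ker i^* = ⊥V = U`, `ker i^! = V⊥ = W` and `ker q = U⊥ = V`.
-/

open CategoryTheory Limits Pretriangulated

universe v₁ v₂ v₃ u₁ u₂ u₃

namespace PaperIKM

/-- A recollement of `D` relative to `A` (via the inclusion-type functor `i`) and `B`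
(via the quotient-type functor `q`) : the remaining four functors, the four adjunctions,
full faithfulness of `i`, `j_! = jShriek` and `j_* = jStar`, and the kernel/image
identifications. -/
structure IsRecollement {A : Type u₁} {D : Type u₂} {B : Type u₃}
    [Category.{v₁} A] [Category.{v₂} D] [Category.{v₃} B]
    (i : A ⥤ D) (q : D ⥤ B) where
  iStar : D ⥤ A
  iShriek : D ⥤ A
  jShriek : B ⥤ D
  jStar : B ⥤ D
  adj₁ : iStar ⊣ i
  adj₂ : i ⊣ iShriek
  adj₃ : jShriek ⊣ q
  adj₄ : q ⊣ jStar
  i_full : i.Full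
  i_faithful : i.Faithful
  jShriek_full : jShriek.Full
  jShriek_faithful : jShriek.Faithful
  jStar_full : jStar.Full
  jStar_faithful : jStar.Faithful
  im_jShriek_eq_ker_iStar : ∀ X : D, (∃ Y, Nonempty (jShriek.obj Y ≅ X)) ↔ IsZero (iStar.obj X)
  im_i_eq_ker_q : ∀ X : D, (∃ Y, Nonempty (i.obj Y ≅ X)) ↔ IsZero (q.obj X)
  im_jStar_eq_ker_iShriek : ∀ X : D, (∃ Y, Nonempty (jStar.obj Y ≅ X)) ↔ IsZero (iShriek.obj X)

variable (C : Type u₁) [Category.{v₁} C] [HasZeroObject C] [HasShift C ℤ] [Preadditive C]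
  [∀ n : ℤ, (shiftFunctor C n).Additive] [Pretriangulated C]

/-- A stable t-structure in a pretriangulated category. -/
structure IsStableTStructure (U V : Set C) : Prop where
  shift_memU : ∀ (n : ℤ) (X : C), X ∈ U → (shiftFunctor C n).obj X ∈ U
  shift_memV : ∀ (n : ℤ) (X : C), X ∈ V → (shiftFunctor C n).obj X ∈ V
  hom_zero : ∀ ⦃X Y : C⦄, X ∈ U → Y ∈ V → ∀ f : X ⟶ Y, f = 0
  exists_triangle : ∀ X : C, ∃ (A B : C) (_ : A ∈ U) (_ : B ∈ V)
    (f : A ⟶ X) (g : X ⟶ B) (h : B ⟶ A⟦(1 : ℤ)⟧),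
      Triangle.mk f g h ∈ distTriang C

/-- A full triangulated subcategory, given as a set of objects. -/
structure IsTriangulatedSub (U : Set C) : Prop where
  zero_mem : ∀ X : C, IsZero X → X ∈ U
  iso_mem : ∀ ⦃X Y : C⦄, (X ≅ Y) → X ∈ U → Y ∈ U
  shift_mem : ∀ (n : ℤ) (X : C), X ∈ U → (shiftFunctor C n).obj X ∈ U
  ext_mem : ∀ T : Triangle C, (T ∈ distTriang C) → T.obj₁ ∈ U → T.obj₃ ∈ U → T.obj₂ ∈ U

variable {C}

/-- The class of morphisms whose cone belongs to `W`; localizing at this class produces the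
Verdier quotient by `W`. -/
def coneIn (W : Set C) : MorphismProperty C := fun X Y f =>
  ∃ (Z : C) (g : Y ⟶ Z) (h : Z ⟶ X⟦(1 : ℤ)⟧),
    (Triangle.mk f g h ∈ distTriang C) ∧ Z ∈ W

lemma coneIn_eq_trW (V : Set C) : coneIn V = ObjectProperty.trW (· ∈ V) := by
  ext X Y f
  simp only [coneIn, ObjectProperty.trW, exists_prop]

section Reflection

variable {D : Type*} [Category D] {P : ObjectProperty D} {W : MorphismProperty D}

theorem exists_leftAdjoint_ι_isLocalization (hP : P ≤ W.isLocal)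
    (hW : ∀ X, ∃ (Y : D) (η : X ⟶ Y), W η ∧ P Y) :
    ∃ (L : D ⥤ P.FullSubcategory) (_ : L ⊣ P.ι), L.IsLocalization W := by
  choose Y η hη hY using hW
  let e (X : D) (Z : P.FullSubcategory) : (⟨Y X, hY X⟩ ⟶ Z) ≃ (X ⟶ P.ι.obj Z) :=
    Equiv.ofBijective (fun g => η X ≫ P.ι.map g)
      ((hP _ Z.2 _ (hη X)).comp (P.fullyFaithfulι.map_bijective _ _))
  have he : ∀ X Z Z' (g : Z ⟶ Z') h, e X Z' (h ≫ g) = e X Z h ≫ P.ι.map g := by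
    simp [e]
  let adj := Adjunction.adjunctionOfEquivLeft e he
  refine ⟨_, adj, adj.isLocalization_leftAdjoint W (fun X X' f hf => ?_) (fun X => ?_)⟩
  · rw [← ObjectProperty.isLocal_iff_isIso_map adj]
    rintro _ ⟨Z, rfl⟩
    exact hP _ Z.2 f hf
  · simpa [adj, e] using hη X

theorem exists_rightAdjoint_ι_isLocalization (hP : P ≤ W.isColocal)
    (hW : ∀ X, ∃ (Y : D) (ε : Y ⟶ X), W ε ∧ P Y) :
    ∃ (R : D ⥤ P.FullSubcategory) (_ : P.ι ⊣ R), R.IsLocalization W := by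
  choose Y ε hε hY using hW
  let e (Z : P.FullSubcategory) (X : D) : (P.ι.obj Z ⟶ X) ≃ (Z ⟶ ⟨Y X, hY X⟩) :=
    (Equiv.ofBijective (fun g : Z ⟶ ⟨Y X, hY X⟩ => P.ι.map g ≫ ε X)
      ((hP _ Z.2 _ (hε X)).comp (P.fullyFaithfulι.map_bijective _ _))).symm
  have he : ∀ Z' Z X (f : Z' ⟶ Z) g, e Z' X (P.ι.map f ≫ g) = f ≫ e Z X g := by
    intro Z' Z X f g
    rw [Equiv.symm_apply_eq, Equiv.ofBijective_apply, Functor.map_comp, Category.assoc]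
    exact congrArg _ ((e Z X).symm_apply_apply g).symm
  let adj := Adjunction.adjunctionOfEquivRight e he
  refine ⟨_, adj, adj.isLocalization_rightAdjoint W (fun X X' f hf => ?_) (fun X => ?_)⟩
  · rw [← ObjectProperty.isColocal_iff_isIso_map adj]
    rintro _ ⟨Z, rfl⟩
    exact hP _ Z.2 f hf
  · simpa [adj, e] using hε X

end Reflection

section Localization

variable {D E : Type*} [Category D] [Category E] {P : ObjectProperty D}
  (W : MorphismProperty D) (q : D ⥤ E) [q.IsLocalization W]

lemma essImage_ι_iff [P.IsClosedUnderIsomorphisms] (X : D) : P.ι.essImage X ↔ P X :=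
  ⟨fun ⟨Y, ⟨e⟩⟩ => P.prop_of_iso e Y.2, fun h => ⟨⟨X, h⟩, ⟨Iso.refl _⟩⟩⟩

theorem exists_leftAdjoint_of_isLocalization {R : D ⥤ P.FullSubcategory} (adj : P.ι ⊣ R)
    [R.IsLocalization W] :
    ∃ (j : E ⥤ D) (_ : j ⊣ q), j.Full ∧ j.Faithful ∧ j.essImage = P.ι.essImage := by
  let e := Localization.uniq R q W
  exact ⟨e.inverse ⋙ P.ι, (e.symm.toAdjunction.comp adj).ofNatIsoRight
    (Localization.compUniqFunctor R q W), inferInstance, inferInstance,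
    Functor.essImage_comp_of_essSurj⟩

theorem exists_rightAdjoint_of_isLocalization {L : D ⥤ P.FullSubcategory} (adj : L ⊣ P.ι)
    [L.IsLocalization W] :
    ∃ (j : E ⥤ D) (_ : q ⊣ j), j.Full ∧ j.Faithful ∧ j.essImage = P.ι.essImage := by
  let e := Localization.uniq L q W
  exact ⟨e.inverse ⋙ P.ι, (adj.comp e.toAdjunction).ofNatIsoLeft
    (Localization.compUniqFunctor L q W), inferInstance, inferInstance,
    Functor.essImage_comp_of_essSurj⟩

lemma isZero_functor_obj_iff {A : Type*} [Category A] (e : A ≌ E) (X : A) :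
    IsZero (e.functor.obj X) ↔ IsZero X :=
  ⟨IsZero.of_full_of_faithful_of_isZero e.functor X,
    fun h => IsZero.of_full_of_faithful_of_isZero e.inverse _ (h.of_iso (e.unitIso.app X).symm)⟩

lemma isZero_obj_iff_of_isLocalization {A : Type*} [Category A] (L : D ⥤ A) [L.IsLocalization W]
    (X : D) : IsZero (q.obj X) ↔ IsZero (L.obj X) := by
  rw [← isZero_functor_obj_iff (Localization.uniq L q W)]
  exact ⟨fun h => h.of_iso ((Localization.compUniqFunctor L q W).app X),
    fun h => h.of_iso ((Localization.compUniqFunctor L q W).app X).symm⟩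

end Localization

section Orthogonal

variable {D : Type*} [Category D] [Preadditive D] {P : ObjectProperty D}

lemma isZero_leftAdjoint_obj_iff {L : D ⥤ P.FullSubcategory} (adj : L ⊣ P.ι) (X : D) :
    IsZero (L.obj X) ↔ P.leftOrthogonal X := by
  refine ⟨fun h Y f hY => ?_, fun h => ?_⟩
  · obtain ⟨g, rfl⟩ := (adj.homEquiv X ⟨Y, hY⟩).surjective f
    rw [h.eq_of_src g 0, adj.homEquiv_unit, Functor.map_zero, comp_zero]
  · rw [IsZero.iff_id_eq_zero]
    exact (adj.homEquiv _ _).injective ((h _ (L.obj X).2).trans (h _ (L.obj X).2).symm)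

lemma isZero_rightAdjoint_obj_iff {R : D ⥤ P.FullSubcategory} (adj : P.ι ⊣ R) (X : D) :
    IsZero (R.obj X) ↔ P.rightOrthogonal X := by
  refine ⟨fun h Y f hY => ?_, fun h => ?_⟩
  · obtain ⟨g, rfl⟩ := (adj.homEquiv ⟨Y, hY⟩ X).symm.surjective f
    rw [h.eq_of_tgt g 0, adj.homEquiv_counit, Functor.map_zero, zero_comp]
  · rw [IsZero.iff_id_eq_zero]
    exact (adj.homEquiv _ _).symm.injective ((h _ (R.obj X).2).trans (h _ (R.obj X).2).symm)

end Orthogonal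

lemma IsTriangulatedSub.isClosedUnderIsomorphisms {S : Set C} (hS : IsTriangulatedSub C S) :
    ObjectProperty.IsClosedUnderIsomorphisms (· ∈ S) :=
  ⟨fun e hX => hS.iso_mem e hX⟩

lemma IsTriangulatedSub.isTriangulated {S : Set C} (hS : IsTriangulatedSub C S) :
    ObjectProperty.IsTriangulated (· ∈ S) where
  exists_zero := ⟨_, isZero_zero C, hS.zero_mem _ (isZero_zero C)⟩
  isStableUnderShiftBy n := ⟨fun X hX => hS.shift_mem n X hX⟩
  ext₂' T hT h₁ h₃ := ObjectProperty.le_isoClosure _ _ (hS.ext_mem T hT h₁ h₃)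

namespace IsStableTStructure

variable {S T : Set C} (h : IsStableTStructure C S T)
include h

lemma le_rightOrthogonal : (· ∈ T) ≤ ObjectProperty.rightOrthogonal (· ∈ S) :=
  fun _ hY _ f hX => h.hom_zero hX hY f

lemma le_leftOrthogonal : (· ∈ S) ≤ ObjectProperty.leftOrthogonal (· ∈ T) :=
  fun _ hX _ f hY => h.hom_zero hX hY f

lemma leftOrthogonal_eq [ObjectProperty.IsClosedUnderIsomorphisms (· ∈ S)] :
    ObjectProperty.leftOrthogonal (· ∈ T) = (· ∈ S) := by
  refine le_antisymm (fun X hX => ?_) h.le_leftOrthogonal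
  obtain ⟨A, B, hA, hB, f, g, w, hT⟩ := h.exists_triangle X
  have hB0 : IsZero B := by
    rw [IsZero.iff_id_eq_zero]
    obtain ⟨k, hk⟩ := Triangle.yoneda_exact₃ _ hT (𝟙 B) ((Category.comp_id g).trans (hX g hB))
    obtain rfl : k = 0 := h.hom_zero (h.shift_memU 1 A hA) hB k
    exact hk.trans comp_zero
  have : IsIso f := (Triangle.isZero₃_iff_isIso₁ _ hT).1 hB0
  exact ObjectProperty.prop_of_iso _ (asIso f) hA

lemma rightOrthogonal_eq [ObjectProperty.IsClosedUnderIsomorphisms (· ∈ T)] :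
    ObjectProperty.rightOrthogonal (· ∈ S) = (· ∈ T) := by
  refine le_antisymm (fun X hX => ?_) h.le_rightOrthogonal
  obtain ⟨A, B, hA, hB, f, g, w, hT⟩ := h.exists_triangle X
  have hA0 : IsZero A := by
    rw [IsZero.iff_id_eq_zero]
    obtain ⟨k, hk⟩ := Triangle.coyoneda_exact₂ _ (inv_rot_of_distTriang _ hT) (𝟙 A)
      ((Category.id_comp f).trans (hX f hA))
    obtain rfl : k = 0 := h.hom_zero hA (h.shift_memV (-1) B hB) k
    exact hk.trans zero_comp
  have : IsIso g := (Triangle.isZero₁_iff_isIso₂ _ hT).1 hA0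
  exact ObjectProperty.prop_of_iso _ (asIso g).symm hB

lemma exists_trW_to_right (X : C) :
    ∃ (B : C) (η : X ⟶ B), ObjectProperty.trW (· ∈ S) η ∧ B ∈ T := by
  obtain ⟨A, B, hA, hB, f, g, w, hT⟩ := h.exists_triangle X
  exact ⟨B, g, ⟨_, _, _, rot_of_distTriang _ hT, h.shift_memU 1 A hA⟩, hB⟩

lemma exists_trW_from_left (X : C) :
    ∃ (A : C) (ε : A ⟶ X), ObjectProperty.trW (· ∈ T) ε ∧ A ∈ S := by
  obtain ⟨A, B, hA, hB, f, g, w, hT⟩ := h.exists_triangle X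
  exact ⟨A, f, ⟨_, _, _, hT, hB⟩, hA⟩

theorem exists_leftAdjoint_ι (hS : IsTriangulatedSub C S) :
    ∃ (L : C ⥤ ObjectProperty.FullSubcategory (· ∈ T)) (_ : L ⊣ ObjectProperty.ι (· ∈ T)),
      L.IsLocalization (coneIn S) := by
  have := hS.isTriangulated
  rw [coneIn_eq_trW]
  exact exists_leftAdjoint_ι_isLocalization
    (h.le_rightOrthogonal.trans (ObjectProperty.isLocal_trW _).ge) h.exists_trW_to_right

theorem exists_rightAdjoint_ι (hT : IsTriangulatedSub C T) :
    ∃ (R : C ⥤ ObjectProperty.FullSubcategory (· ∈ S)) (_ : ObjectProperty.ι (· ∈ S) ⊣ R),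
      R.IsLocalization (coneIn T) := by
  have := hT.isTriangulated
  rw [coneIn_eq_trW]
  exact exists_rightAdjoint_ι_isLocalization
    (h.le_leftOrthogonal.trans (ObjectProperty.isColocal_trW _).ge) h.exists_trW_from_left

end IsStableTStructure

/-- given stable t-structures `(U, V)` and `(V, W)` in a triangulated
category `D`, for the canonical embedding `i : V → D` and any Verdier quotient functor
`q : D → D/V` (i.e. a localization at the morphisms with cone in `V`), there is a
recollement whose `j_!` has essential image `U` and whose `j_*` has essential image `W`. -/
theorem stmt0 (U V W : Set C)
    (hUsub : IsTriangulatedSub C U) (hVsub : IsTriangulatedSub C V)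
    (hWsub : IsTriangulatedSub C W)
    (hUV : IsStableTStructure C U V) (hVW : IsStableTStructure C V W)
    (E : Type u₂) [Category.{v₂} E] (q : C ⥤ E) [q.IsLocalization (coneIn V)] :
    ∃ rec : IsRecollement (ObjectProperty.ι (· ∈ V)) q,
      (∀ X : C, (∃ Y, Nonempty (rec.jShriek.obj Y ≅ X)) ↔ X ∈ U) ∧
      (∀ X : C, (∃ Y, Nonempty (rec.jStar.obj Y ≅ X)) ↔ X ∈ W) := by
  have := hUsub.isClosedUnderIsomorphisms
  have := hVsub.isClosedUnderIsomorphisms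
  have := hWsub.isClosedUnderIsomorphisms
  obtain ⟨iStar, adj₁, -⟩ := hUV.exists_leftAdjoint_ι hUsub
  obtain ⟨iShriek, adj₂, -⟩ := hVW.exists_rightAdjoint_ι hWsub
  obtain ⟨R, adjR, _⟩ := hUV.exists_rightAdjoint_ι hVsub
  obtain ⟨L, adjL, _⟩ := hVW.exists_leftAdjoint_ι hVsub
  obtain ⟨jShriek, adj₃, _, _, hjShriek⟩ :=
    exists_leftAdjoint_of_isLocalization (coneIn V) q adjR
  obtain ⟨jStar, adj₄, _, _, hjStar⟩ := exists_rightAdjoint_of_isLocalization (coneIn V) q adjL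
  have im_jShriek (X : C) : jShriek.essImage X ↔ X ∈ U := by rw [hjShriek, essImage_ι_iff]
  have im_jStar (X : C) : jStar.essImage X ↔ X ∈ W := by rw [hjStar, essImage_ι_iff]
  have ker_iStar (X : C) : IsZero (iStar.obj X) ↔ X ∈ U := by
    rw [isZero_leftAdjoint_obj_iff adj₁, hUV.leftOrthogonal_eq]
  have ker_iShriek (X : C) : IsZero (iShriek.obj X) ↔ X ∈ W := by
    rw [isZero_rightAdjoint_obj_iff adj₂, hVW.rightOrthogonal_eq]
  have ker_q (X : C) : IsZero (q.obj X) ↔ X ∈ V := by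
    rw [isZero_obj_iff_of_isLocalization (coneIn V) q R, isZero_rightAdjoint_obj_iff adjR,
      hUV.rightOrthogonal_eq]
  exact ⟨⟨iStar, iShriek, jShriek, jStar, adj₁, adj₂, adj₃, adj₄, inferInstance, inferInstance,
    ‹_›, ‹_›, ‹_›, ‹_›, fun X => (im_jShriek X).trans (ker_iStar X).symm,
    fun X => (essImage_ι_iff X).trans (ker_q X).symm,
    fun X => (im_jStar X).trans (ker_iShriek X).symm⟩, im_jShriek, im_jStar⟩

end PaperIKM
end

section
/- Let F : D₁ → D₂ be a triangle functor sending a stable t-structure (U₁, V₁) in D₁ to a stable t-structure (U₂, V₂) in D₂ (i.e. F(U₁) ⊆ U₂ and F(V₁) ⊆ V₂). If the restriction F|_{U₁} is full (resp. faithful), then the map Hom_{D₁}(U, X) → Hom_{D₂}(FU, FX) is surjective (resp. injective) for all U ∈ U₁ and X ∈ D₁. -/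
/-!
Take the triangle `A → X → B → A⟦1⟧` with `A ∈ U₁`, `B ∈ V₁`, and its image under `F`.
Since `Hom(U, V⟦n⟧) = 0` for `U` in the aisle and `V` in the co-aisle, the long exact
`Hom`-sequences show that composing with `A → X` is bijective on `Hom(U, -)` in `C`, and
likewise with `F A → F X` on `Hom(F U, -)` in `D`. This reduces both statements to the maps
`Hom(U, A) → Hom(F U, F A)` between objects of `U₁`.
-/

open CategoryTheory Limits Pretriangulated

universe v₁ v₂ u₁ u₂

namespace PaperIKM

variable (C : Type u₁) [Category.{v₁} C] [HasZeroObject C] [HasShift C ℤ] [Preadditive C]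
  [∀ n : ℤ, (shiftFunctor C n).Additive] [Pretriangulated C]

variable {C}
variable {D : Type u₂} [Category.{v₂} D] [HasZeroObject D] [HasShift D ℤ] [Preadditive D]
  [∀ n : ℤ, (shiftFunctor D n).Additive] [Pretriangulated D]

section Triangle

variable {T : Triangle C} (hT : T ∈ distTriang C) {U : C}
include hT

lemma surjective_comp_mor₁_of_distTriang (h₃ : ∀ g : U ⟶ T.obj₃, g = 0) :
    Function.Surjective (fun e : U ⟶ T.obj₁ => e ≫ T.mor₁) := fun f =>
  (Triangle.coyoneda_exact₂ T hT f (h₃ _)).imp fun _ h => h.symm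

lemma injective_comp_mor₁_of_distTriang (h₃ : ∀ g : U ⟶ T.obj₃⟦(-1 : ℤ)⟧, g = 0) :
    Function.Injective (fun e : U ⟶ T.obj₁ => e ≫ T.mor₁) := by
  intro e e' hee'
  rw [← sub_eq_zero]
  have hsub : (e - e') ≫ T.mor₁ = 0 := by
    rw [Preadditive.sub_comp, sub_eq_zero]
    exact hee'
  obtain ⟨g, hg⟩ := Triangle.coyoneda_exact₂ _ (inv_rot_of_distTriang _ hT) _ hsub
  rw [hg, h₃ g]
  exact zero_comp

end Triangle

lemma IsStableTStructure.bijective_comp_mor₁ {U V : Set C} (h : IsStableTStructure C U V)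
    {T : Triangle C} (hT : T ∈ distTriang C) (hV : T.obj₃ ∈ V) {X : C} (hX : X ∈ U) :
    Function.Bijective (fun e : X ⟶ T.obj₁ => e ≫ T.mor₁) :=
  ⟨injective_comp_mor₁_of_distTriang hT (h.hom_zero hX (h.shift_memV (-1) _ hV)),
    surjective_comp_mor₁_of_distTriang hT (h.hom_zero hX hV)⟩

/-- if a triangle functor sends a stable t-structure to a stable
t-structure and its restriction to `U₁` is full (resp. faithful), then the induced maps
`Hom(U, X) → Hom(FU, FX)` are surjective (resp. injective) for `U ∈ U₁`, `X` arbitrary. -/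
theorem stmt1 (F : C ⥤ D) [F.CommShift ℤ] [F.IsTriangulated]
    (U₁ V₁ : Set C) (U₂ V₂ : Set D)
    (h₁ : IsStableTStructure C U₁ V₁) (h₂ : IsStableTStructure D U₂ V₂)
    (hU : ∀ X ∈ U₁, F.obj X ∈ U₂) (hV : ∀ X ∈ V₁, F.obj X ∈ V₂) :
    ((∀ (X Y : C), X ∈ U₁ → Y ∈ U₁ →
        Function.Surjective (fun f : X ⟶ Y => F.map f)) →
      ∀ (U X : C), U ∈ U₁ →
        Function.Surjective (fun f : U ⟶ X => F.map f)) ∧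
    ((∀ (X Y : C), X ∈ U₁ → Y ∈ U₁ →
        Function.Injective (fun f : X ⟶ Y => F.map f)) →
      ∀ (U X : C), U ∈ U₁ →
        Function.Injective (fun f : U ⟶ X => F.map f)) := by
  constructor
  · intro hfull U X hU₁ g
    obtain ⟨A, B, hA, hB, a, b, c, hT⟩ := h₁.exists_triangle X
    obtain ⟨g', rfl⟩ := (h₂.bijective_comp_mor₁ (F.map_distinguished _ hT) (hV B hB)
      (hU U hU₁)).surjective g
    obtain ⟨f, rfl⟩ := hfull U A hU₁ hA g'
    exact ⟨f ≫ a, F.map_comp f a⟩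
  · intro hfaith U X hU₁ f f' hff'
    obtain ⟨A, B, hA, hB, a, b, c, hT⟩ := h₁.exists_triangle X
    obtain ⟨e, rfl⟩ := (h₁.bijective_comp_mor₁ hT hB hU₁).surjective f
    obtain ⟨e', rfl⟩ := (h₁.bijective_comp_mor₁ hT hB hU₁).surjective f'
    have hFe : F.map e = F.map e' :=
      (h₂.bijective_comp_mor₁ (F.map_distinguished _ hT) (hV B hB) (hU U hU₁)).injective
        ((F.map_comp e a).symm.trans (hff'.trans (F.map_comp e' a)))
    exact congrArg (· ≫ a) (hfaith U A hU₁ hA hFe)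

end PaperIKM
end

section
/- Let F : D₁ → D₂ be a triangle functor sending a stable t-structure (U₁, V₁) in D₁ to a stable t-structure (U₂, V₂) in D₂. If F is full and the restrictions F|_{U₁} : U₁ → U₂ and F|_{V₁} : V₁ → V₂ are essentially surjective, then F is essentially surjective. -/
open CategoryTheory Limits Pretriangulated

universe v₁ v₂ u₁ u₂

namespace PaperIKM

variable (C : Type u₁) [Category.{v₁} C] [HasZeroObject C] [HasShift C ℤ] [Preadditive C]
  [∀ n : ℤ, (shiftFunctor C n).Additive] [Pretriangulated C]

variable {C}
variable {D : Type u₂} [Category.{v₂} D] [HasZeroObject D] [HasShift D ℤ] [Preadditive D]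
  [∀ n : ℤ, (shiftFunctor D n).Additive] [Pretriangulated D]

/-- The essential image of a full triangle functor is a triangulated subcategory, so it is closed
under extensions. -/
theorem essSurj_of_isStableTStructure_le_essImage (F : C ⥤ D) [F.CommShift ℤ] [F.IsTriangulated]
    [F.Full] {U V : Set D} (h : IsStableTStructure D U V) (hU : ∀ Y ∈ U, F.essImage Y)
    (hV : ∀ Y ∈ V, F.essImage Y) : F.EssSurj where
  mem_essImage Y := by
    obtain ⟨A, B, hA, hB, f, g, δ, hT⟩ := h.exists_triangle Y
    exact F.essImage.ext_of_isTriangulatedClosed₂ _ hT (hU A hA) (hV B hB)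

theorem stmt2_general (F : C ⥤ D) [F.CommShift ℤ] [F.IsTriangulated]
    (U₁ V₁ : Set C) (U₂ V₂ : Set D)
    (h₂ : IsStableTStructure D U₂ V₂)
    (hfull : F.Full)
    (hUdense : ∀ Y ∈ U₂, ∃ X ∈ U₁, Nonempty (F.obj X ≅ Y))
    (hVdense : ∀ Y ∈ V₂, ∃ X ∈ V₁, Nonempty (F.obj X ≅ Y)) :
    F.EssSurj :=
  essSurj_of_isStableTStructure_le_essImage F h₂
    (fun Y hY => let ⟨X, _, hX⟩ := hUdense Y hY; ⟨X, hX⟩)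
    (fun Y hY => let ⟨X, _, hX⟩ := hVdense Y hY; ⟨X, hX⟩)

/-- if a triangle functor `F` sends a stable t-structure `(U₁, V₁)` to a stable
t-structure `(U₂, V₂)`, `F` is full, and the restrictions `U₁ → U₂`, `V₁ → V₂` are essentially
surjective, then `F` is essentially surjective. -/
theorem stmt2 (F : C ⥤ D) [F.CommShift ℤ] [F.IsTriangulated]
    (U₁ V₁ : Set C) (U₂ V₂ : Set D)
    (h₁ : IsStableTStructure C U₁ V₁) (h₂ : IsStableTStructure D U₂ V₂)
    (hU : ∀ X ∈ U₁, F.obj X ∈ U₂) (hV : ∀ X ∈ V₁, F.obj X ∈ V₂)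
    (hfull : F.Full)
    (hUdense : ∀ Y ∈ U₂, ∃ X ∈ U₁, Nonempty (F.obj X ≅ Y))
    (hVdense : ∀ Y ∈ V₂, ∃ X ∈ V₁, Nonempty (F.obj X ≅ Y)) :
    F.EssSurj :=
  stmt2_general F U₁ V₁ U₂ V₂ h₂ hfull hUdense hVdense

end PaperIKM
end

section
/- Let C and C' be Frobenius categories and F : C → C', G : C' → C exact functors such that F is right adjoint to G. Then F sends projective-injective objects to projective-injective objects, G sends projective-injective objects to projective-injective objects, and the induced triangle functors F̱ : C̱ → C̱' and G̱ : C̱' → C̱ on stable categories satisfy that F̱ is right adjoint to G̱. -/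
/-!
By adjunction, a lifting problem for `F P` against a conflation `(f, g)` is the same as one for
`P` against `(G f, G g)`, which is again a conflation; so `F` preserves injectives and, dually,
`G` preserves projectives. In a Frobenius category both classes are the projective-injectives.
Consequently `F` and `G` preserve the ideal of morphisms factoring through projectives, and the
additive hom-bijection `(G X ⟶ Y) ≃ (X ⟶ F Y)` maps this ideal onto itself
(`a ≫ b ↦ (adj.homEquiv a) ≫ F.map b`), so the adjunction descends to the stable categories.
-/

open CategoryTheory Limits

universe v₁ v₂ u₁ u₂

namespace PaperIKM

/-- The data of an exact structure (a class of conflations) on an additive category,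
together with choices of "injective hulls" defining the suspension, as in a Frobenius
category. -/
structure FrobeniusData (C : Type u₁) [Category.{v₁} C] [Preadditive C] where
  /-- `conf f g` : `0 → X --f--> Y --g--> Z → 0` is a conflation. -/
  conf : ∀ ⦃X Y Z : C⦄, (X ⟶ Y) → (Y ⟶ Z) → Prop
  /-- chosen projective-injective object receiving `X` -/
  I : C → C
  /-- the suspension of `X`, cokernel of `X ⟶ I X` -/
  susp : C → C
  unitI : ∀ X : C, X ⟶ I X
  counitI : ∀ X : C, I X ⟶ susp X

namespace FrobeniusData

variable {C : Type u₁} [Category.{v₁} C] [Preadditive C] (E : FrobeniusData C)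

/-- Projectivity with respect to the conflations of `E`. -/
def Proj (P : C) : Prop :=
  ∀ ⦃X Y Z : C⦄ (f : X ⟶ Y) (g : Y ⟶ Z), E.conf f g → ∀ h : P ⟶ Z, ∃ l : P ⟶ Y, l ≫ g = h

/-- Injectivity with respect to the conflations of `E`. -/
def Inj (I' : C) : Prop :=
  ∀ ⦃X Y Z : C⦄ (f : X ⟶ Y) (g : Y ⟶ Z), E.conf f g → ∀ h : X ⟶ I', ∃ l : Y ⟶ I', f ≫ l = h

/-- The axioms making `E` a Frobenius category. -/
structure IsFrobenius : Prop where
  comp_zero : ∀ ⦃X Y Z : C⦄ (f : X ⟶ Y) (g : Y ⟶ Z), E.conf f g → f ≫ g = 0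
  conf_ker : ∀ ⦃X Y Z : C⦄ (f : X ⟶ Y) (g : Y ⟶ Z), E.conf f g →
    ∀ (T : C) (u : T ⟶ Y), u ≫ g = 0 → ∃! v : T ⟶ X, v ≫ f = u
  conf_coker : ∀ ⦃X Y Z : C⦄ (f : X ⟶ Y) (g : Y ⟶ Z), E.conf f g →
    ∀ (T : C) (u : Y ⟶ T), f ≫ u = 0 → ∃! v : Z ⟶ T, g ≫ v = u
  enough_proj : ∀ X : C, ∃ (P K : C) (k : K ⟶ P) (p : P ⟶ X), E.Proj P ∧ E.conf k p
  enough_inj : ∀ X : C, ∃ (J K : C) (i : X ⟶ J) (c : J ⟶ K), E.Inj J ∧ E.conf i c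
  proj_iff_inj : ∀ P : C, E.Proj P ↔ E.Inj P
  conf_unit : ∀ X : C, E.conf (E.unitI X) (E.counitI X)
  I_proj : ∀ X : C, E.Proj (E.I X)

/-- Two morphisms are stably equal if their difference factors through a projective. -/
def stableRel : HomRel C := fun {X Y} f g =>
  ∃ (P : C) (_ : E.Proj P) (a : X ⟶ P) (b : P ⟶ Y), f - g = a ≫ b

/-- The stable category of the Frobenius category. -/
def Stable := CategoryTheory.Quotient E.stableRel

instance : Category E.Stable := CategoryTheory.Quotient.category E.stableRel

/-- The quotient functor to the stable category. -/
def toStable : C ⥤ E.Stable := CategoryTheory.Quotient.functor E.stableRel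

end FrobeniusData

variable {C : Type u₁} [Category.{v₁} C] [Preadditive C]
variable {D : Type u₂} [Category.{v₂} D] [Preadditive D]

section QuotientAdjunction

variable {A : Type*} [Category A] {B : Type*} [Category B] {r : HomRel A} {s : HomRel B}
  [r.IsStableUnderPrecomp] [r.IsStableUnderPostcomp]
  [s.IsStableUnderPrecomp] [s.IsStableUnderPostcomp] {F : A ⥤ B} {G : B ⥤ A}

def _root_.CategoryTheory.Adjunction.liftQuotient (adj : G ⊣ F)
    (hF : ∀ ⦃X Y : A⦄ (f g : X ⟶ Y), r f g → s (F.map f) (F.map g))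
    (hG : ∀ ⦃X Y : B⦄ (f g : X ⟶ Y), s f g → r (G.map f) (G.map g))
    (hadj : ∀ ⦃X : B⦄ ⦃Y : A⦄ (f g : G.obj X ⟶ Y),
      r f g ↔ s (adj.homEquiv X Y f) (adj.homEquiv X Y g)) :
    CategoryTheory.Quotient.lift s (G ⋙ CategoryTheory.Quotient.functor r)
        (fun _ _ f g h => CategoryTheory.Quotient.sound r (hG f g h)) ⊣
      CategoryTheory.Quotient.lift r (F ⋙ CategoryTheory.Quotient.functor s)
        (fun _ _ f g h => CategoryTheory.Quotient.sound s (hF f g h)) :=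
  Adjunction.mkOfHomEquiv
    { homEquiv := fun X Y => Quot.congr (adj.homEquiv X.as Y.as) fun f g => by
        simpa only [HomRel.compClosure_iff_self] using hadj f g
      homEquiv_naturality_left_symm := fun f g =>
        Quot.inductionOn f fun f₀ => Quot.inductionOn g fun g₀ =>
          congrArg (Quot.mk _) (adj.homEquiv_naturality_left_symm f₀ g₀)
      homEquiv_naturality_right := fun f g =>
        Quot.inductionOn f fun f₀ => Quot.inductionOn g fun g₀ =>
          congrArg (Quot.mk _) (adj.homEquiv_naturality_right f₀ g₀) }

end QuotientAdjunction

namespace FrobeniusData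

section

variable (E : FrobeniusData C)

instance : E.stableRel.IsStableUnderPrecomp where
  comp_left f _ _ := fun ⟨P, hP, a, b, hab⟩ =>
    ⟨P, hP, f ≫ a, b, by rw [← Preadditive.comp_sub, hab, Category.assoc]⟩

instance : E.stableRel.IsStableUnderPostcomp where
  comp_right g := fun ⟨P, hP, a, b, hab⟩ =>
    ⟨P, hP, a, b ≫ g, by rw [← Preadditive.sub_comp, hab, Category.assoc]⟩

variable {E}

theorem IsFrobenius.proj_and_inj_of_proj (hE : E.IsFrobenius) {P : C} (hP : E.Proj P) :
    E.Proj P ∧ E.Inj P :=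
  ⟨hP, (hE.proj_iff_inj P).1 hP⟩

theorem IsFrobenius.proj_and_inj_of_inj (hE : E.IsFrobenius) {P : C} (hP : E.Inj P) :
    E.Proj P ∧ E.Inj P :=
  ⟨(hE.proj_iff_inj P).2 hP, hP⟩

end

variable {E : FrobeniusData C} {E' : FrobeniusData D} {F : C ⥤ D} {G : D ⥤ C}

theorem Inj.map_rightAdjoint (adj : G ⊣ F)
    (hG : ∀ ⦃X Y Z : D⦄ (f : X ⟶ Y) (g : Y ⟶ Z), E'.conf f g →
      E.conf (G.map f) (G.map g))
    {P : C} (hP : E.Inj P) : E'.Inj (F.obj P) := by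
  intro X Y Z f g hfg h
  obtain ⟨l, hl⟩ := hP (G.map f) (G.map g) (hG f g hfg) ((adj.homEquiv X P).symm h)
  refine ⟨adj.homEquiv Y P l, ?_⟩
  rw [← adj.homEquiv_naturality_left, hl, Equiv.apply_symm_apply]

theorem Proj.map_leftAdjoint (adj : G ⊣ F)
    (hF : ∀ ⦃X Y Z : C⦄ (f : X ⟶ Y) (g : Y ⟶ Z), E.conf f g →
      E'.conf (F.map f) (F.map g))
    {P : D} (hP : E'.Proj P) : E.Proj (G.obj P) := by
  intro X Y Z f g hfg h
  obtain ⟨l, hl⟩ := hP (F.map f) (F.map g) (hF f g hfg) (adj.homEquiv P Z h)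
  refine ⟨(adj.homEquiv P Y).symm l, ?_⟩
  rw [← adj.homEquiv_naturality_right_symm, hl, Equiv.symm_apply_apply]

theorem stableRel.map [F.Additive] (hF : ∀ P, E.Proj P → E'.Proj (F.obj P)) {X Y : C}
    {f g : X ⟶ Y} (h : E.stableRel f g) : E'.stableRel (F.map f) (F.map g) :=
  let ⟨P, hP, a, b, hab⟩ := h
  ⟨F.obj P, hF P hP, F.map a, F.map b, by rw [← F.map_sub, hab, F.map_comp]⟩

theorem stableRel_homEquiv_iff [G.Additive] (adj : G ⊣ F)
    (hF : ∀ P, E.Proj P → E'.Proj (F.obj P)) (hG : ∀ P, E'.Proj P → E.Proj (G.obj P))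
    ⦃X : D⦄ ⦃Y : C⦄ (f g : G.obj X ⟶ Y) :
    E.stableRel f g ↔ E'.stableRel (adj.homEquiv X Y f) (adj.homEquiv X Y g) := by
  constructor
  · rintro ⟨P, hP, a, b, hab⟩
    exact ⟨F.obj P, hF P hP, adj.homEquiv X P a, F.map b, by
      rw [← adj.homAddEquiv_sub, hab, adj.homEquiv_naturality_right]⟩
  · rintro ⟨P, hP, a, b, hab⟩
    exact ⟨G.obj P, hG P hP, G.map a, (adj.homEquiv P Y).symm b, by
      rw [← (adj.homEquiv X Y).symm_apply_apply (f - g), adj.homAddEquiv_sub, hab,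
        adj.homEquiv_naturality_left_symm]⟩

end FrobeniusData

/-- if `F : C ⥤ D` and `G : D ⥤ C` are exact functors between Frobenius
categories with `F` right adjoint to `G`, then both preserve projective-injective objects
and the induced functors on stable categories are again adjoint (`Ḡ ⊣ F̄`). -/
theorem stmt19 (E : FrobeniusData C) (E' : FrobeniusData D)
    (hE : E.IsFrobenius) (hE' : E'.IsFrobenius)
    (F : C ⥤ D) (G : D ⥤ C) [F.Additive] [G.Additive]
    (hFexact : ∀ ⦃X Y Z : C⦄ (f : X ⟶ Y) (g : Y ⟶ Z), E.conf f g →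
      E'.conf (F.map f) (F.map g))
    (hGexact : ∀ ⦃X Y Z : D⦄ (f : X ⟶ Y) (g : Y ⟶ Z), E'.conf f g →
      E.conf (G.map f) (G.map g))
    (adj : G ⊣ F) :
    (∀ P : C, E.Proj P ∧ E.Inj P → E'.Proj (F.obj P) ∧ E'.Inj (F.obj P)) ∧
    (∀ P : D, E'.Proj P ∧ E'.Inj P → E.Proj (G.obj P) ∧ E.Inj (G.obj P)) ∧
    ∃ (Fbar : E.Stable ⥤ E'.Stable) (Gbar : E'.Stable ⥤ E.Stable),
      (E.toStable ⋙ Fbar = F ⋙ E'.toStable) ∧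
      (E'.toStable ⋙ Gbar = G ⋙ E.toStable) ∧
      Nonempty (Gbar ⊣ Fbar) := by
  have hF : ∀ P : C, E.Proj P ∧ E.Inj P → E'.Proj (F.obj P) ∧ E'.Inj (F.obj P) :=
    fun _ hP => hE'.proj_and_inj_of_inj (hP.2.map_rightAdjoint adj hGexact)
  have hG : ∀ P : D, E'.Proj P ∧ E'.Inj P → E.Proj (G.obj P) ∧ E.Inj (G.obj P) :=
    fun _ hP => hE.proj_and_inj_of_proj (hP.1.map_leftAdjoint adj hFexact)
  have hFproj : ∀ P, E.Proj P → E'.Proj (F.obj P) :=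
    fun P hP => (hF P (hE.proj_and_inj_of_proj hP)).1
  have hGproj : ∀ P, E'.Proj P → E.Proj (G.obj P) :=
    fun P hP => (hG P (hE'.proj_and_inj_of_proj hP)).1
  exact ⟨hF, hG, _, _, CategoryTheory.Quotient.lift_spec _ _ _,
    CategoryTheory.Quotient.lift_spec _ _ _,
    ⟨adj.liftQuotient (fun _ _ _ _ h => h.map hFproj) (fun _ _ _ _ h => h.map hGproj)
      (FrobeniusData.stableRel_homEquiv_iff adj hFproj hGproj)⟩⟩

end PaperIKM
end
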